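/- arXiv:2110.06008 — 2 statements merged into one kernel-verified Lean document; each statement's English description precedes it below -/
import Mathlib

section
/- For all integers k and l: Q₁(k,l) ≥ 2/(3√3) and Q₁(k,l) ≥ (2/(3√3))·(k² + l²). -/
/-!
Multiplying out, `√3 · Q₁(k,l) = 2 m + 2/3` with `m = k² + kl + l² + k + l` an integer, and
`4m + 1 = (2k + l + 1)² + l(3l + 2)` shows `m ≥ 0`. Likewise
`8(3m + 1 - k² - l²) + 1 = (4k + 3l + 3)² + l(7l + 6)` gives `k² + l² ≤ 3m + 1`.
Both bounds follow, since `l(cl + d) ≥ 0` for every integer `l` once `0 ≤ d ≤ c`.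
-/

/-- The quadratic form `Q₁(k,l) = (2/√3)(k+(l+1)/2)² + (√3/2)(l+1/3)²`. -/
noncomputable def Q1 (k l : ℤ) : ℝ :=
  2 / Real.sqrt 3 * ((k : ℝ) + ((l : ℝ) + 1) / 2) ^ 2 +
    Real.sqrt 3 / 2 * ((l : ℝ) + 1 / 3) ^ 2

theorem Int.mul_mul_add_nonneg (l : ℤ) {c d : ℤ} (hd : 0 ≤ d) (hdc : d ≤ c) :
    0 ≤ l * (c * l + d) := by
  rcases le_or_gt 0 l with hl | hl
  · exact mul_nonneg hl (by nlinarith)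
  · exact mul_nonneg_of_nonpos_of_nonpos hl.le (by nlinarith)

def Q1Int (k l : ℤ) : ℤ := k ^ 2 + k * l + l ^ 2 + k + l

theorem Q1_eq (k l : ℤ) : Q1 k l = 2 / Real.sqrt 3 * ((Q1Int k l : ℝ) + 1 / 3) := by
  have hs : Real.sqrt 3 ^ 2 = 3 := Real.sq_sqrt (by norm_num)
  unfold Q1 Q1Int
  push_cast
  field_simp
  linear_combination (9 * (l : ℝ) ^ 2 + 6 * l + 1) * hs

theorem Q1Int_nonneg (k l : ℤ) : 0 ≤ Q1Int k l := by
  have hl := Int.mul_mul_add_nonneg l (c := 3) (d := 2) (by norm_num) (by norm_num)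
  have h : 0 ≤ 4 * Q1Int k l + 1 := by
    unfold Q1Int; nlinarith [sq_nonneg (2 * k + l + 1)]
  omega

theorem sq_add_sq_le_three_mul_Q1Int_add_one (k l : ℤ) :
    k ^ 2 + l ^ 2 ≤ 3 * Q1Int k l + 1 := by
  have hl := Int.mul_mul_add_nonneg l (c := 7) (d := 6) (by norm_num) (by norm_num)
  have h : 0 ≤ 8 * (3 * Q1Int k l + 1 - (k ^ 2 + l ^ 2)) + 1 := by
    unfold Q1Int; nlinarith [sq_nonneg (4 * k + 3 * l + 3)]
  omega

/-- Growth of `Q₁`: `Q₁(k,l) ≥ 2/(3√3)` and `Q₁(k,l) ≥ (2/(3√3))(k²+l²)`. -/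
theorem Q1_growth (k l : ℤ) :
    2 / (3 * Real.sqrt 3) ≤ Q1 k l ∧
    2 / (3 * Real.sqrt 3) * ((k : ℝ) ^ 2 + (l : ℝ) ^ 2) ≤ Q1 k l := by
  have hm : (0 : ℝ) ≤ Q1Int k l := by exact_mod_cast Q1Int_nonneg k l
  have hkl : (k : ℝ) ^ 2 + (l : ℝ) ^ 2 ≤ 3 * Q1Int k l + 1 := by
    exact_mod_cast sq_add_sq_le_three_mul_Q1Int_add_one k l
  rw [Q1_eq]
  constructor
  · calc 2 / (3 * Real.sqrt 3) = 2 / Real.sqrt 3 * (1 / 3) := by ring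
      _ ≤ _ := by gcongr; linarith
  · calc 2 / (3 * Real.sqrt 3) * ((k : ℝ) ^ 2 + (l : ℝ) ^ 2)
          = 2 / Real.sqrt 3 * (((k : ℝ) ^ 2 + (l : ℝ) ^ 2) / 3) := by ring
      _ ≤ _ := by gcongr; linarith
end

section
/- For all integers k, l with l ≠ 0 and every real y ≥ √3/2: (1/y)·(k² + kl + (1/4 + y²)·l²) ≥ √(k² + kl + l²); i.e. min_{y ≥ √3/2} (1/y)·(k² + kl + (1/4 + y²)·l²) ≥ √(Q₂(k,l)). -/
/-- For integers `k, l` with `l ≠ 0` and all `y ≥ √3/2`: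
`(1/y)(k² + kl + (1/4 + y²)l²) ≥ √(k² + kl + l²) = √(Q₂(k,l))`. -/
theorem Q2_growth (k l : ℤ) (hl : l ≠ 0) (y : ℝ) (hy : Real.sqrt 3 / 2 ≤ y) :
    Real.sqrt ((k : ℝ) ^ 2 + (k : ℝ) * (l : ℝ) + (l : ℝ) ^ 2) ≤
      1 / y * ((k : ℝ) ^ 2 + (k : ℝ) * (l : ℝ) + (1 / 4 + y ^ 2) * (l : ℝ) ^ 2) := by
  have hr0 : (0:ℝ) < Real.sqrt 3 := by positivity
  have hr2 : (Real.sqrt 3) ^ 2 = 3 := Real.sq_sqrt (by norm_num)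
  have hy0 : (0:ℝ) < y := lt_of_lt_of_le (by positivity) hy
  have hl2 : (1:ℝ) ≤ (l:ℝ)^2 := by
    have : (1:ℤ) ≤ l^2 := by rcases lt_or_gt_of_ne hl with h | h <;> nlinarith
    exact_mod_cast this
  set Q : ℝ := (k : ℝ) ^ 2 + (k : ℝ) * (l : ℝ) + (l : ℝ) ^ 2 with hQdef
  have hQ34 : 3/4 * (l:ℝ)^2 ≤ Q := by nlinarith [sq_nonneg ((k:ℝ) + (l:ℝ)/2)]
  have hQ0 : 0 ≤ Q := by nlinarith
  set s : ℝ := Real.sqrt Q with hsdef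
  have hs0 : 0 ≤ s := Real.sqrt_nonneg _
  have hs2 : s ^ 2 = Q := Real.sq_sqrt hQ0
  rw [one_div, ← div_eq_inv_mul, le_div_iff₀ hy0]
  -- goal: s * y ≤ k^2 + k*l + (1/4 + y^2) * l^2
  have hsr : Real.sqrt 3 / 2 ≤ s := by
    rw [hsdef, show Real.sqrt 3 / 2 = Real.sqrt (3/4) by
      rw [show (3:ℝ)/4 = (Real.sqrt 3 / 2)^2 by rw [div_pow, hr2]; norm_num,
        Real.sqrt_sq (by positivity)]]
    exact Real.sqrt_le_sqrt (by nlinarith)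
  rcases le_total s (Real.sqrt 3 * (l:ℝ)^2) with h | h
  · nlinarith [mul_nonneg (sub_nonneg.2 hy)
      (by nlinarith : (0:ℝ) ≤ (l:ℝ)^2 * y + (l:ℝ)^2 * (Real.sqrt 3 / 2) - s),
      mul_nonneg hs0 (sub_nonneg.2 hsr)]
  · nlinarith [sq_nonneg (2 * (l:ℝ)^2 * y - s),
      mul_nonneg (sub_nonneg.2 h) (by positivity : (0:ℝ) ≤ s + Real.sqrt 3 * (l:ℝ)^2)]
end
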